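/- If G is a planar graph with maximum degree Δ ≥ 6, then the clique number of the extended line graph L^+(G) is at most 2Δ. -/

import Mathlib

open SimpleGraph

variable {V : Type*}

/-- Four distinct vertices forming a 4-cycle in `G`. -/
def IsC4 (G : SimpleGraph V) (a b c d : V) : Prop :=
  a ≠ b ∧ a ≠ c ∧ a ≠ d ∧ b ≠ c ∧ b ≠ d ∧ c ≠ d ∧
    G.Adj a b ∧ G.Adj b c ∧ G.Adj c d ∧ G.Adj d a

/-- A proper edge coloring of `G` in which every 4-cycle is rainbow. -/
def IsBColoring (G : SimpleGraph V) {α : Type*} (C : Sym2 V → α) : Prop :=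
  (∀ a b c : V, G.Adj a b → G.Adj a c → b ≠ c → C s(a, b) ≠ C s(a, c)) ∧
  (∀ a b c d : V, IsC4 G a b c d →
    C s(a, b) ≠ C s(b, c) ∧ C s(a, b) ≠ C s(c, d) ∧ C s(a, b) ≠ C s(d, a) ∧
    C s(b, c) ≠ C s(c, d) ∧ C s(b, c) ≠ C s(d, a) ∧ C s(c, d) ≠ C s(d, a))

/-- The minimum number of colors in a B-coloring of `G`. -/
noncomputable def qB (G : SimpleGraph V) : ℕ :=
  sInf {n | ∃ C : Sym2 V → Fin n, IsBColoring G C}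

/-- `e` and `f` are opposite edges of some 4-cycle of `G`. -/
def OppC4 (G : SimpleGraph V) (e f : Sym2 V) : Prop :=
  ∃ a b c d : V, IsC4 G a b c d ∧ e = s(a, b) ∧ f = s(c, d)

/-- Two edges (as unordered pairs) share no vertex. -/
def EdgeDisjoint (e f : Sym2 V) : Prop := ∀ v : V, v ∈ e → v ∉ f

/-- The graph `F(G)` on the edges of `G`: two vertex-disjoint edges are adjacent
iff they are opposite edges of a 4-cycle of `G`. -/
def Fgraph (G : SimpleGraph V) : SimpleGraph G.edgeSet :=
  SimpleGraph.fromRel fun e f =>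
    EdgeDisjoint (e : Sym2 V) (f : Sym2 V) ∧ OppC4 G (e : Sym2 V) (f : Sym2 V)

/-- The extended line graph `L⁺(G)`: edges of `G` are adjacent if they share an
endpoint or are opposite edges of a 4-cycle of `G`. -/
def Lplus (G : SimpleGraph V) : SimpleGraph G.edgeSet :=
  SimpleGraph.fromRel fun e f =>
    (∃ v : V, v ∈ (e : Sym2 V) ∧ v ∈ (f : Sym2 V)) ∨ OppC4 G (e : Sym2 V) (f : Sym2 V)

/-- `H` is a minor of `G`, via branch sets. -/
def HasMinor {W : Type*} (G : SimpleGraph V) (H : SimpleGraph W) : Prop :=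
  ∃ B : W → Set V,
    (∀ w, (G.induce (B w)).Connected) ∧
    (∀ w₁ w₂, w₁ ≠ w₂ → Disjoint (B w₁) (B w₂)) ∧
    (∀ w₁ w₂, H.Adj w₁ w₂ → ∃ v₁ ∈ B w₁, ∃ v₂ ∈ B w₂, G.Adj v₁ v₂)

/-- Planarity via Wagner's theorem: no `K₅` minor and no `K₃,₃` minor. -/
def IsPlanar (G : SimpleGraph V) : Prop :=
  ¬ HasMinor G (completeGraph (Fin 5)) ∧
    ¬ HasMinor G (completeBipartiteGraph (Fin 3) (Fin 3))

/-- Outerplanarity: no `K₄` minor and no `K₂,₃` minor. -/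
def IsOuterplanar (G : SimpleGraph V) : Prop :=
  ¬ HasMinor G (completeGraph (Fin 4)) ∧
    ¬ HasMinor G (completeBipartiteGraph (Fin 2) (Fin 3))

/-- `G` is 2-connected: at least 3 vertices and removing any vertex leaves it connected. -/
def IsTwoConnected (G : SimpleGraph V) : Prop :=
  3 ≤ Nat.card V ∧ ∀ v : V, (G.induce {u | u ≠ v}).Connected

/-- `K₄` minus one edge, on `Fin 4` (the edge between `2` and `3` removed). -/
def K4e : SimpleGraph (Fin 4) :=
  SimpleGraph.fromRel fun x y => s(x, y) ≠ s((2 : Fin 4), (3 : Fin 4))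

/-- The chromatic index: minimum number of colors in a proper edge coloring. -/
noncomputable def chromIndex (G : SimpleGraph V) : ℕ :=
  sInf {n | ∃ C : Sym2 V → Fin n,
    ∀ a b c : V, G.Adj a b → G.Adj a c → b ≠ c → C s(a, b) ≠ C s(a, c)}

/-- `K₆` minus a perfect matching, on `Fin 6` (the matching `01, 23, 45` removed). -/
def K6mM : SimpleGraph (Fin 6) :=
  SimpleGraph.fromRel fun x y => (x : ℕ) / 2 ≠ (y : ℕ) / 2

/-- A path `v₀v₁v₂v₃` together with a vertex `4` adjacent to all four path vertices. -/
def FanGraph : SimpleGraph (Fin 5) :=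
  SimpleGraph.fromRel fun x y =>
    ((x : ℕ) + 1 = (y : ℕ) ∧ (y : ℕ) ≤ 3) ∨ (x : ℕ) = 4


/-!
Let `K` be a clique of `L⁺(G)`, viewed as a set of edges of `G`: two disjoint edges of `K` are
opposite sides of a 4-cycle, so they are joined by two edges of `G`.

If three edges of `K` are pairwise disjoint, then, as `G` has no `K₃,₃` minor, they can be
oriented to form a triangular prism, and every edge of `K` meets the prism (a prism over `K₄`
contracts to `K₃,₃`). Excluding `K₅` and `K₃,₃` minors, `K` contains at most one diagonal of each
square of the prism, and its edges leave the prism at no more than one vertex of each triangle,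
at most two of them, and only if no edge of the other triangle is in `K`. Hence
`|K| ≤ 3 + 3 + 3 + 3 = 12 ≤ 2Δ`.

Otherwise suppose `|K| > 2Δ`. For every vertex `p`, the at least `Δ + 1 ≥ 4` edges of `K`
avoiding `p` do not form a star, so two of them are disjoint, and every edge of `K` at `p` meets
one of these two. Let `uv`, `xy` be disjoint edges of `K`; every edge of `K` meets
`S = {u, v, x, y}`, so at most two edges of `K` leave `S` at any vertex of `S`. Edges leaving `S`
at `x` and at `y` are both disjoint from `uv`, hence share their end outside `S`; so at most two
edges leave `S` at `x` or `y`, and likewise at `u` or `v`. Hence `|K| ≤ 6 + 2 + 2 < 2Δ`.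
-/

open Function Finset

theorem EdgeDisjoint.symm {e f : Sym2 V} (h : EdgeDisjoint e f) : EdgeDisjoint f e :=
  fun v hf he => h v he hf

theorem EdgeDisjoint.ne {e f : Sym2 V} (h : EdgeDisjoint e f) : e ≠ f := by
  rintro rfl
  induction e using Sym2.ind with
  | _ x y => exact h x (Sym2.mem_mk_left x y) (Sym2.mem_mk_left x y)

theorem not_edgeDisjoint_iff {e f : Sym2 V} : ¬ EdgeDisjoint e f ↔ ∃ v ∈ e, v ∈ f := by
  simp [EdgeDisjoint]

theorem edgeDisjoint_mk_iff {a b c d : V} :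
    EdgeDisjoint s(a, b) s(c, d) ↔ a ≠ c ∧ a ≠ d ∧ b ≠ c ∧ b ≠ d := by
  simp only [EdgeDisjoint, Sym2.mem_iff, or_imp, forall_and, forall_eq, not_or]
  tauto

theorem pairwise_edgeDisjoint_cons {n : ℕ} {g : Sym2 V} {e : Fin n → Sym2 V}
    (hg : ∀ i, EdgeDisjoint g (e i)) (he : Pairwise (EdgeDisjoint on e)) :
    Pairwise (EdgeDisjoint on (Fin.cons g e : Fin (n + 1) → Sym2 V)) :=
  pairwise_fin_succ_iff.2 ⟨fun i => (hg i).symm, hg, fun _ _ h => he h⟩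

theorem pairwise_edgeDisjoint_vec3 {g₁ g₂ g₃ : Sym2 V} (h₁₂ : EdgeDisjoint g₁ g₂)
    (h₁₃ : EdgeDisjoint g₁ g₃) (h₂₃ : EdgeDisjoint g₂ g₃) :
    Pairwise (EdgeDisjoint on ![g₁, g₂, g₃]) :=
  pairwise_edgeDisjoint_cons (Fin.forall_fin_two.2 ⟨h₁₂, h₁₃⟩) <|
    pairwise_edgeDisjoint_cons (Fin.forall_fin_one.2 h₂₃) Subsingleton.pairwise

theorem injective_sumElim_of_pairwise_edgeDisjoint {ι : Type*} {a b : ι → V}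
    (hd : Pairwise (EdgeDisjoint on fun i => s(a i, b i))) (hab : ∀ i, a i ≠ b i) :
    Injective (Sum.elim a b) := by
  have key : ∀ i j v, v ∈ s(a i, b i) → v ∈ s(a j, b j) → i = j :=
    fun i j v hi hj => by_contra fun hij => hd hij v hi hj
  rintro (i | i) (j | j) h <;>
    simp only [Sum.elim_inl, Sum.elim_inr, Sum.inl.injEq, Sum.inr.injEq, reduceCtorEq] at h ⊢
  · exact key i j (a i) (by simp) (by simp [h])
  · obtain rfl := key i j (a i) (by simp) (by simp [h]); exact hab i h
  · obtain rfl := key i j (b i) (by simp) (by simp [h]); exact hab i h.symm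
  · exact key i j (b i) (by simp) (by simp [h])

theorem mem_or_mem_of_not_edgeDisjoint {a b : V} {g : Sym2 V} (h : ¬ EdgeDisjoint s(a, b) g) :
    a ∈ g ∨ b ∈ g := by
  obtain ⟨v, hv, hvg⟩ := not_edgeDisjoint_iff.1 h
  rcases Sym2.mem_iff.1 hv with rfl | rfl
  exacts [.inl hvg, .inr hvg]

theorem Sym2.exists_eq_mk (g : Sym2 V) : ∃ a b, g = s(a, b) := by
  induction g using Sym2.ind with
  | _ a b => exact ⟨a, b, rfl⟩

theorem injective_vec3 {α : Type*} {x y z : α} (hxy : x ≠ y) (hxz : x ≠ z) (hyz : y ≠ z) :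
    Injective ![x, y, z] := by
  intro i j h
  fin_cases i <;> fin_cases j <;> simp_all [eq_comm]

theorem Fin.exists_ne_and_ne_of_three (i j : Fin 3) : ∃ k, k ≠ i ∧ k ≠ j := by
  revert i j
  decide

theorem injective_sumElim_comp {ι κ : Type*} {a b : ι → V} (h : Injective (Sum.elim a b))
    {τ : κ → ι} (hτ : Injective τ) : Injective (Sum.elim (a ∘ τ) (b ∘ τ)) := by
  rw [← Sum.elim_comp_map]
  exact h.comp (Sum.map_injective.2 ⟨hτ, hτ⟩)

section Minors

variable {G : SimpleGraph V}

theorem induce_pair_connected_of_eq_or_adj {x y : V} (h : x = y ∨ G.Adj x y) :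
    (G.induce {x, y}).Connected := by
  rcases h with rfl | h
  · rw [Set.pair_eq_singleton, induce_singleton_eq_top]
    exact connected_top
  · exact induce_pair_connected_of_adj h

/-- Branch sets `{ψ (f w), ψ (g w)}`: with `ψ` injective, their disjointness is a property of the
pattern `f`, `g` alone, which `decide` checks when it is concrete. -/
theorem hasMinor_of_pairs {U W : Type*} {H : SimpleGraph W} (ψ : U → V) (hψ : Injective ψ)
    (f g : W → U) (hdisj : ∀ w w', w ≠ w' → f w ≠ f w' ∧ f w ≠ g w' ∧ g w ≠ g w')
    (hfg : ∀ w, f w = g w ∨ G.Adj (ψ (f w)) (ψ (g w)))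
    (hadj : ∀ w w', H.Adj w w' →
      ∃ p q, (p = f w ∨ p = g w) ∧ (q = f w' ∨ q = g w') ∧ G.Adj (ψ p) (ψ q)) :
    HasMinor G H := by
  refine ⟨fun w => {ψ (f w), ψ (g w)}, fun w => induce_pair_connected_of_eq_or_adj ?_,
    fun w w' hne => ?_, fun w w' h => ?_⟩
  · exact (hfg w).imp_left (congrArg ψ)
  · obtain ⟨h₁, h₂, h₃⟩ := hdisj w w' hne
    have h₄ := (hdisj w' w hne.symm).2.1
    simp [hψ.eq_iff, h₁.symm, h₂.symm, h₃.symm, h₄]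
  · obtain ⟨p, q, hp, hq, hpq⟩ := hadj w w' h
    exact ⟨ψ p, by rcases hp with rfl | rfl <;> simp, ψ q, by rcases hq with rfl | rfl <;> simp,
      hpq⟩

theorem hasMinor_K33_of_pairs {U : Type*} (ψ : U → V) (hψ : Injective ψ)
    (f g : Fin 3 ⊕ Fin 3 → U) (hdisj : ∀ w w', w ≠ w' → f w ≠ f w' ∧ f w ≠ g w' ∧ g w ≠ g w')
    (hfg : ∀ w, f w = g w ∨ G.Adj (ψ (f w)) (ψ (g w)))
    (hadj : ∀ i j, ∃ p q, (p = f (.inl i) ∨ p = g (.inl i)) ∧ (q = f (.inr j) ∨ q = g (.inr j)) ∧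
      G.Adj (ψ p) (ψ q)) :
    HasMinor G (completeBipartiteGraph (Fin 3) (Fin 3)) := by
  refine hasMinor_of_pairs ψ hψ f g hdisj hfg ?_
  rintro (i | i) (j | j) h
  · simp at h
  · exact hadj i j
  · obtain ⟨p, q, hp, hq, hpq⟩ := hadj j i
    exact ⟨q, p, hq, hp, hpq.symm⟩
  · simp at h

theorem hasMinor_K5_of_pairs {U : Type*} (ψ : U → V) (hψ : Injective ψ)
    (f g : Fin 5 → U) (hdisj : ∀ w w', w ≠ w' → f w ≠ f w' ∧ f w ≠ g w' ∧ g w ≠ g w')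
    (hfg : ∀ w, f w = g w ∨ G.Adj (ψ (f w)) (ψ (g w)))
    (hadj : ∀ i j, i < j → ∃ p q, (p = f i ∨ p = g i) ∧ (q = f j ∨ q = g j) ∧ G.Adj (ψ p) (ψ q)) :
    HasMinor G (completeGraph (Fin 5)) := by
  refine hasMinor_of_pairs ψ hψ f g hdisj hfg fun i j h => ?_
  rcases (top_adj i j).1 h |>.lt_or_gt with hij | hji
  · exact hadj i j hij
  · obtain ⟨p, q, hp, hq, hpq⟩ := hadj j i hji
    exact ⟨q, p, hq, hp, hpq.symm⟩

theorem hasMinor_K33_of_forall_adj {x y : Fin 3 → V} (hinj : Injective (Sum.elim x y))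
    (h : ∀ i j, G.Adj (x i) (y j)) : HasMinor G (completeBipartiteGraph (Fin 3) (Fin 3)) :=
  hasMinor_K33_of_pairs (Sum.elim x y) hinj id id (fun _ _ h => ⟨h, h, h⟩)
    (fun _ => .inl rfl) fun i j => ⟨_, _, .inl rfl, .inl rfl, h i j⟩

end Minors

theorem OppC4.adj_or_adj {G : SimpleGraph V} {a b c d : V} (h : OppC4 G s(a, b) s(c, d)) :
    (G.Adj a c ∧ G.Adj b d) ∨ (G.Adj a d ∧ G.Adj b c) := by
  obtain ⟨p, q, r, t, ⟨-, -, -, -, -, -, -, hqr, -, htp⟩, he, hf⟩ := h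
  rw [Sym2.eq_iff] at he hf
  rcases he with ⟨rfl, rfl⟩ | ⟨rfl, rfl⟩ <;> rcases hf with ⟨rfl, rfl⟩ | ⟨rfl, rfl⟩
  · exact .inr ⟨htp.symm, hqr⟩
  · exact .inl ⟨htp.symm, hqr⟩
  · exact .inl ⟨hqr, htp.symm⟩
  · exact .inr ⟨hqr, htp.symm⟩

/-- A clique of `L⁺(G)` as a set of edges of `G`, keeping only what adjacency says about
disjoint edges. -/
structure IsLplusClique (G : SimpleGraph V) (K : Finset (Sym2 V)) : Prop where
  mem_edgeSet : ∀ g ∈ K, g ∈ G.edgeSet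
  oppC4 : ∀ g ∈ K, ∀ h ∈ K, EdgeDisjoint g h → OppC4 G g h ∨ OppC4 G h g

namespace IsLplusClique

variable {G : SimpleGraph V} {K : Finset (Sym2 V)}

theorem adj_or_adj (hK : IsLplusClique G K) {a b c d : V} (hab : s(a, b) ∈ K)
    (hcd : s(c, d) ∈ K) (h : EdgeDisjoint s(a, b) s(c, d)) :
    (G.Adj a c ∧ G.Adj b d) ∨ (G.Adj a d ∧ G.Adj b c) := by
  rcases hK.oppC4 _ hab _ hcd h with h | h
  · exact h.adj_or_adj
  · rcases h.adj_or_adj with ⟨h₁, h₂⟩ | ⟨h₁, h₂⟩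
    · exact .inl ⟨h₁.symm, h₂.symm⟩
    · exact .inr ⟨h₂.symm, h₁.symm⟩

end IsLplusClique

theorem SimpleGraph.IsClique.isLplusClique_image_val [DecidableEq V] {G : SimpleGraph V}
    {t : Finset G.edgeSet} (ht : (Lplus G).IsClique (t : Set G.edgeSet)) :
    IsLplusClique G (t.image Subtype.val) := by
  refine ⟨fun g hg => ?_, fun g hg g' hg' hd => ?_⟩
  · obtain ⟨e, -, rfl⟩ := mem_image.1 hg
    exact e.2
  obtain ⟨e, he, rfl⟩ := mem_image.1 hg
  obtain ⟨f, hf, rfl⟩ := mem_image.1 hg'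
  have hadj := ht he hf fun h => hd.ne (congrArg Subtype.val h)
  simp only [Lplus, fromRel_adj] at hadj
  rcases hadj.2 with (⟨v, hv, hv'⟩ | ho) | (⟨v, hv, hv'⟩ | ho)
  · exact absurd hv' (hd v hv)
  · exact .inl ho
  · exact absurd hv (hd v hv')
  · exact .inr ho

/-- Two cliques `a`, `b` of `G` joined by the rungs `a i b i`: for `ι = Fin 3` a triangular prism
with top triangle `a` and bottom triangle `b`. -/
structure IsPrism (G : SimpleGraph V) {ι : Type*} (a b : ι → V) : Prop where
  injective : Injective (Sum.elim a b)
  adj_rung : ∀ i, G.Adj (a i) (b i)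
  adj_top : Pairwise fun i j => G.Adj (a i) (a j)
  adj_bot : Pairwise fun i j => G.Adj (b i) (b j)

namespace IsPrism

variable {G : SimpleGraph V} {ι : Type*} {a b : ι → V}

theorem symm (hp : IsPrism G a b) : IsPrism G b a where
  injective := by rw [← Sum.elim_swap]; exact hp.injective.comp Sum.swap_leftInverse.injective
  adj_rung i := (hp.adj_rung i).symm
  adj_top := hp.adj_bot
  adj_bot := hp.adj_top

theorem comp (hp : IsPrism G a b) {κ : Type*} {τ : κ → ι} (hτ : Injective τ) :
    IsPrism G (a ∘ τ) (b ∘ τ) where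
  injective := injective_sumElim_comp hp.injective hτ
  adj_rung i := hp.adj_rung (τ i)
  adj_top _ _ h := hp.adj_top (hτ.ne h)
  adj_bot _ _ h := hp.adj_bot (hτ.ne h)

theorem top_injective (hp : IsPrism G a b) : Injective a :=
  hp.injective.comp Sum.inl_injective

theorem top_ne_bot (hp : IsPrism G a b) (i j : ι) : a i ≠ b j :=
  fun h => Sum.inl_ne_inr (hp.injective h)

theorem pairwise_edgeDisjoint (hp : IsPrism G a b) :
    Pairwise (EdgeDisjoint on fun i => s(a i, b i)) := fun i j hij =>
  edgeDisjoint_mk_iff.2 ⟨hp.top_injective.ne hij, hp.top_ne_bot i j,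
    (hp.top_ne_bot j i).symm, hp.symm.top_injective.ne hij⟩

theorem hasMinor_K33 {a b : Fin 4 → V} (hp : IsPrism G a b) :
    HasMinor G (completeBipartiteGraph (Fin 3) (Fin 3)) := by
  refine hasMinor_K33_of_pairs (Sum.elim a b) hp.injective
    (Sum.elim ![.inl 0, .inl 1, .inr 2] ![.inl 2, .inl 3, .inr 0])
    (Sum.elim ![.inl 0, .inl 1, .inr 3] ![.inl 2, .inl 3, .inr 1]) (by decide) ?_ ?_
  · rintro (i | i) <;> fin_cases i
    exacts [.inl rfl, .inl rfl, .inr (hp.adj_bot (by decide)), .inl rfl, .inl rfl,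
      .inr (hp.adj_bot (by decide))]
  · intro i j
    fin_cases i <;> fin_cases j
    exacts [⟨_, _, .inl rfl, .inl rfl, hp.adj_top (by decide)⟩,
      ⟨_, _, .inl rfl, .inl rfl, hp.adj_top (by decide)⟩,
      ⟨_, _, .inl rfl, .inl rfl, hp.adj_rung 0⟩,
      ⟨_, _, .inl rfl, .inl rfl, hp.adj_top (by decide)⟩,
      ⟨_, _, .inl rfl, .inl rfl, hp.adj_top (by decide)⟩,
      ⟨_, _, .inl rfl, .inr rfl, hp.adj_rung 1⟩,
      ⟨_, _, .inl rfl, .inl rfl, (hp.adj_rung 2).symm⟩,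
      ⟨_, _, .inr rfl, .inl rfl, (hp.adj_rung 3).symm⟩,
      ⟨_, _, .inl rfl, .inl rfl, hp.adj_bot (by decide)⟩]

end IsPrism

theorem hasMinor_K33_of_crossed {G : SimpleGraph V} {a b : Fin 3 → V}
    (hinj : Injective (Sum.elim a b)) (hr : ∀ i, G.Adj (a i) (b i))
    (h₁ : G.Adj (a 0) (a 1)) (h₁' : G.Adj (b 0) (b 1)) (h₂ : G.Adj (a 0) (a 2))
    (h₂' : G.Adj (b 0) (b 2)) (hx : G.Adj (a 1) (b 2)) (hx' : G.Adj (a 2) (b 1)) :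
    HasMinor G (completeBipartiteGraph (Fin 3) (Fin 3)) := by
  let σ : Fin 3 ⊕ Fin 3 → Fin 3 ⊕ Fin 3 :=
    Sum.elim ![.inl 0, .inr 1, .inr 2] ![.inr 0, .inl 1, .inl 2]
  refine hasMinor_K33_of_pairs (Sum.elim a b) hinj σ σ (by decide) (fun _ => .inl rfl) ?_
  intro i j
  fin_cases i <;> fin_cases j
  exacts [⟨_, _, .inl rfl, .inl rfl, hr 0⟩, ⟨_, _, .inl rfl, .inl rfl, h₁⟩,
    ⟨_, _, .inl rfl, .inl rfl, h₂⟩, ⟨_, _, .inl rfl, .inl rfl, h₁'.symm⟩,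
    ⟨_, _, .inl rfl, .inl rfl, (hr 1).symm⟩, ⟨_, _, .inl rfl, .inl rfl, hx'.symm⟩,
    ⟨_, _, .inl rfl, .inl rfl, h₂'.symm⟩, ⟨_, _, .inl rfl, .inl rfl, hx.symm⟩,
    ⟨_, _, .inl rfl, .inl rfl, (hr 2).symm⟩]

theorem IsLplusClique.exists_orient {G : SimpleGraph V} {K : Finset (Sym2 V)}
    (hK : IsLplusClique G K) {ι : Type*} {e : ι → Sym2 V} (he : ∀ i, e i ∈ K)
    (hd : Pairwise (EdgeDisjoint on e)) (i₀ : ι) :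
    ∃ a b : ι → V, (∀ i, e i = s(a i, b i)) ∧
      ∀ i, i ≠ i₀ → G.Adj (a i₀) (a i) ∧ G.Adj (b i₀) (b i) := by
  obtain ⟨a₀, b₀, h₀⟩ := Sym2.exists_eq_mk (e i₀)
  have horient : ∀ i, ∃ p q, e i = s(p, q) ∧ (i = i₀ → p = a₀ ∧ q = b₀) ∧
      (i ≠ i₀ → G.Adj a₀ p ∧ G.Adj b₀ q) := by
    intro i
    by_cases hi : i = i₀
    · subst hi
      exact ⟨a₀, b₀, h₀, fun _ => ⟨rfl, rfl⟩, fun h => absurd rfl h⟩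
    obtain ⟨p, q, hpq⟩ := Sym2.exists_eq_mk (e i)
    have hd' := hd (Ne.symm hi)
    simp only [onFun, h₀, hpq] at hd'
    rcases hK.adj_or_adj (h₀ ▸ he i₀) (hpq ▸ he i) hd' with h | h
    · exact ⟨p, q, hpq, fun h => absurd h hi, fun _ => h⟩
    · exact ⟨q, p, hpq.trans Sym2.eq_swap, fun h => absurd h hi, fun _ => h⟩
  choose a b hab hab₀ hadj₀ using horient
  refine ⟨a, b, hab, fun i hi => ?_⟩
  rw [(hab₀ i₀ rfl).1, (hab₀ i₀ rfl).2]
  exact hadj₀ i hi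

theorem IsLplusClique.exists_isPrism {G : SimpleGraph V} {K : Finset (Sym2 V)}
    (hK : IsLplusClique G K) (h33 : ¬ HasMinor G (completeBipartiteGraph (Fin 3) (Fin 3)))
    {ι : Type*} {e : ι → Sym2 V} (he : ∀ i, e i ∈ K) (hd : Pairwise (EdgeDisjoint on e)) :
    ∃ a b : ι → V, (∀ i, e i = s(a i, b i)) ∧ IsPrism G a b := by
  rcases isEmpty_or_nonempty ι with hι | ⟨⟨i₀⟩⟩
  · exact ⟨isEmptyElim, isEmptyElim, isEmptyElim,
      ⟨by rintro (x | x) <;> exact isEmptyElim x, isEmptyElim, fun i => isEmptyElim i,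
        fun i => isEmptyElim i⟩⟩
  obtain ⟨a, b, hab, h₀⟩ := hK.exists_orient he hd i₀
  obtain rfl : e = fun i => s(a i, b i) := funext hab
  have hrung : ∀ i, G.Adj (a i) (b i) := fun i => hK.mem_edgeSet _ (he i)
  have hinj := injective_sumElim_of_pairwise_edgeDisjoint hd fun i => (hrung i).ne
  have hadj : ∀ i j, i ≠ j → G.Adj (a i) (a j) ∧ G.Adj (b i) (b j) := by
    intro i j hij
    by_cases hi : i = i₀
    · subst hi
      exact h₀ j (Ne.symm hij)
    by_cases hj : j = i₀
    · subst hj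
      exact ⟨(h₀ i hi).1.symm, (h₀ i hi).2.symm⟩
    refine (hK.adj_or_adj (he i) (he j) (hd hij)).resolve_right fun ⟨hx, hx'⟩ => h33 ?_
    have hτ := injective_vec3 (Ne.symm hi) (Ne.symm hj) hij
    exact hasMinor_K33_of_crossed (a := a ∘ ![i₀, i, j]) (b := b ∘ ![i₀, i, j])
      (injective_sumElim_comp hinj hτ) (fun _ => hrung _) (h₀ i hi).1 (h₀ i hi).2
      (h₀ j hj).1 (h₀ j hj).2 hx hx'.symm
  exact ⟨a, b, fun _ => rfl, hinj, hrung, fun i j h => (hadj i j h).1,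
    fun i j h => (hadj i j h).2⟩

namespace IsPrism

variable {G : SimpleGraph V} {a b : Fin 3 → V}

theorem hasMinor_K5_of_adj_diagonals (hp : IsPrism G a b) (h₁ : G.Adj (a 0) (b 1))
    (h₂ : G.Adj (a 1) (b 0)) : HasMinor G (completeGraph (Fin 5)) := by
  refine hasMinor_K5_of_pairs (Sum.elim a b) hp.injective
    ![.inl 0, .inl 1, .inr 0, .inr 1, .inl 2] ![.inl 0, .inl 1, .inr 0, .inr 1, .inr 2]
    (by decide) ?_ ?_
  · intro w
    fin_cases w
    exacts [.inl rfl, .inl rfl, .inl rfl, .inl rfl, .inr (hp.adj_rung 2)]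
  · intro i j hij
    fin_cases i <;> fin_cases j <;> try exact absurd hij (by decide)
    exacts [⟨_, _, .inl rfl, .inl rfl, hp.adj_top (by decide)⟩,
      ⟨_, _, .inl rfl, .inl rfl, hp.adj_rung 0⟩, ⟨_, _, .inl rfl, .inl rfl, h₁⟩,
      ⟨_, _, .inl rfl, .inl rfl, hp.adj_top (by decide)⟩, ⟨_, _, .inl rfl, .inl rfl, h₂⟩,
      ⟨_, _, .inl rfl, .inl rfl, hp.adj_rung 1⟩, ⟨_, _, .inl rfl, .inl rfl, hp.adj_top (by decide)⟩,
      ⟨_, _, .inl rfl, .inl rfl, hp.adj_bot (by decide)⟩,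
      ⟨_, _, .inl rfl, .inr rfl, hp.adj_bot (by decide)⟩,
      ⟨_, _, .inl rfl, .inr rfl, hp.adj_bot (by decide)⟩]

theorem injective_optionElim (hp : IsPrism G a b) {z : V} (hz : ∀ i, z ≠ a i ∧ z ≠ b i) :
    Injective fun o : Option (Fin 3 ⊕ Fin 3) => o.elim z (Sum.elim a b) := by
  have hz' : ∀ x, z ≠ Sum.elim a b x := by
    rintro (i | i)
    exacts [(hz i).1, (hz i).2]
  rintro (_ | x) (_ | y) h
  · rfl
  · exact absurd h (hz' y)
  · exact absurd h.symm (hz' x)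
  · exact congrArg some (hp.injective h)

theorem hasMinor_K33_of_adj_top_bot_bot (hp : IsPrism G a b) {z : V}
    (hz : ∀ i, z ≠ a i ∧ z ≠ b i) (h₀ : G.Adj z (a 0)) (h₁ : G.Adj z (b 1))
    (h₂ : G.Adj z (b 2)) : HasMinor G (completeBipartiteGraph (Fin 3) (Fin 3)) := by
  refine hasMinor_K33_of_pairs _ (hp.injective_optionElim hz)
    (Sum.elim ![some (.inl 0), some (.inr 1), some (.inl 2)] ![none, some (.inl 1), some (.inr 0)])
    (Sum.elim ![some (.inl 0), some (.inr 1), some (.inr 2)] ![none, some (.inl 1), some (.inr 0)])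
    (by decide) ?_ ?_
  · rintro (i | i) <;> fin_cases i
    exacts [.inl rfl, .inl rfl, .inr (hp.adj_rung 2), .inl rfl, .inl rfl, .inl rfl]
  · intro i j
    fin_cases i <;> fin_cases j
    exacts [⟨_, _, .inl rfl, .inl rfl, h₀.symm⟩, ⟨_, _, .inl rfl, .inl rfl, hp.adj_top (by decide)⟩,
      ⟨_, _, .inl rfl, .inl rfl, hp.adj_rung 0⟩, ⟨_, _, .inl rfl, .inl rfl, h₁.symm⟩,
      ⟨_, _, .inl rfl, .inl rfl, (hp.adj_rung 1).symm⟩,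
      ⟨_, _, .inl rfl, .inl rfl, hp.adj_bot (by decide)⟩, ⟨_, _, .inr rfl, .inl rfl, h₂.symm⟩,
      ⟨_, _, .inl rfl, .inl rfl, hp.adj_top (by decide)⟩,
      ⟨_, _, .inr rfl, .inl rfl, hp.adj_bot (by decide)⟩]

theorem hasMinor_K33_of_adj_top_bot_top (hp : IsPrism G a b) {z : V}
    (hz : ∀ i, z ≠ a i ∧ z ≠ b i) (h₀ : G.Adj z (a 0)) (h₁ : G.Adj z (b 1))
    (h₂ : G.Adj z (a 2)) : HasMinor G (completeBipartiteGraph (Fin 3) (Fin 3)) := by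
  refine hasMinor_K33_of_pairs _ (hp.injective_optionElim hz)
    (Sum.elim ![some (.inl 0), some (.inr 1), some (.inl 2)] ![none, some (.inl 1), some (.inr 0)])
    (Sum.elim ![some (.inl 0), some (.inr 1), some (.inl 2)] ![none, some (.inl 1), some (.inr 2)])
    (by decide) ?_ ?_
  · rintro (i | i) <;> fin_cases i
    exacts [.inl rfl, .inl rfl, .inl rfl, .inl rfl, .inl rfl, .inr (hp.adj_bot (by decide))]
  · intro i j
    fin_cases i <;> fin_cases j
    exacts [⟨_, _, .inl rfl, .inl rfl, h₀.symm⟩, ⟨_, _, .inl rfl, .inl rfl, hp.adj_top (by decide)⟩,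
      ⟨_, _, .inl rfl, .inl rfl, hp.adj_rung 0⟩, ⟨_, _, .inl rfl, .inl rfl, h₁.symm⟩,
      ⟨_, _, .inl rfl, .inl rfl, (hp.adj_rung 1).symm⟩,
      ⟨_, _, .inl rfl, .inl rfl, hp.adj_bot (by decide)⟩, ⟨_, _, .inl rfl, .inl rfl, h₂.symm⟩,
      ⟨_, _, .inl rfl, .inl rfl, hp.adj_top (by decide)⟩,
      ⟨_, _, .inl rfl, .inr rfl, hp.adj_rung 2⟩]

theorem hasMinor_K5_of_forall_adj_top (hp : IsPrism G a b) {z : V}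
    (hz : ∀ i, z ≠ a i ∧ z ≠ b i) (ha : ∀ i, G.Adj z (a i)) (hb : G.Adj z (b 0)) :
    HasMinor G (completeGraph (Fin 5)) := by
  refine hasMinor_K5_of_pairs _ (hp.injective_optionElim hz)
    ![none, some (.inl 0), some (.inr 0), some (.inl 1), some (.inl 2)]
    ![none, some (.inl 0), some (.inr 0), some (.inr 1), some (.inr 2)] (by decide) ?_ ?_
  · intro w
    fin_cases w
    exacts [.inl rfl, .inl rfl, .inl rfl, .inr (hp.adj_rung 1), .inr (hp.adj_rung 2)]
  · intro i j hij
    fin_cases i <;> fin_cases j <;> try exact absurd hij (by decide)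
    exacts [⟨_, _, .inl rfl, .inl rfl, ha 0⟩, ⟨_, _, .inl rfl, .inl rfl, hb⟩,
      ⟨_, _, .inl rfl, .inl rfl, ha 1⟩, ⟨_, _, .inl rfl, .inl rfl, ha 2⟩,
      ⟨_, _, .inl rfl, .inl rfl, hp.adj_rung 0⟩, ⟨_, _, .inl rfl, .inl rfl, hp.adj_top (by decide)⟩,
      ⟨_, _, .inl rfl, .inl rfl, hp.adj_top (by decide)⟩,
      ⟨_, _, .inl rfl, .inr rfl, hp.adj_bot (by decide)⟩,
      ⟨_, _, .inl rfl, .inr rfl, hp.adj_bot (by decide)⟩,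
      ⟨_, _, .inl rfl, .inl rfl, hp.adj_top (by decide)⟩]

section Planar

variable {K : Finset (Sym2 V)}

theorem not_adj_diagonals (hp : IsPrism G a b) (hG : IsPlanar G) {i j : Fin 3} (hij : i ≠ j)
    (h₁ : G.Adj (a i) (b j)) (h₂ : G.Adj (a j) (b i)) : False := by
  obtain ⟨k, hki, hkj⟩ := Fin.exists_ne_and_ne_of_three i j
  exact hG.1 ((hp.comp (injective_vec3 hij hki.symm hkj.symm)).hasMinor_K5_of_adj_diagonals h₁ h₂)

theorem adj_of_outer (hp : IsPrism G a b) (hG : IsPlanar G) (hK : IsLplusClique G K)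
    (hr : ∀ i, s(a i, b i) ∈ K) {i : Fin 3} {z : V} (hz : ∀ t, z ≠ a t ∧ z ≠ b t)
    (hzK : s(a i, z) ∈ K) {j : Fin 3} (hji : j ≠ i) : G.Adj (a i) (b j) ∧ G.Adj z (a j) := by
  have hza : G.Adj z (a i) := (hK.mem_edgeSet _ hzK).symm
  have hcross : ∀ t, t ≠ i →
      (G.Adj (a i) (a t) ∧ G.Adj z (b t)) ∨ (G.Adj (a i) (b t) ∧ G.Adj z (a t)) :=
    fun t ht => hK.adj_or_adj hzK (hr t) <| edgeDisjoint_mk_iff.2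
      ⟨hp.top_injective.ne ht.symm, hp.top_ne_bot i t, (hz t).1, (hz t).2⟩
  obtain ⟨k, hki, hkj⟩ := Fin.exists_ne_and_ne_of_three i j
  have hp' := hp.comp (injective_vec3 hji.symm hki.symm hkj.symm)
  refine (hcross j hji).resolve_left fun ⟨_, hzb⟩ => ?_
  rcases hcross k hki with ⟨_, hzb'⟩ | ⟨_, hza'⟩
  · exact hG.2 (hp'.hasMinor_K33_of_adj_top_bot_bot (fun _ => hz _) hza hzb hzb')
  · exact hG.2 (hp'.hasMinor_K33_of_adj_top_bot_top (fun _ => hz _) hza hzb hza')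

theorem forall_adj_top_of_outer (hp : IsPrism G a b) (hG : IsPlanar G)
    (hK : IsLplusClique G K) (hr : ∀ i, s(a i, b i) ∈ K) {i : Fin 3} {z : V}
    (hz : ∀ t, z ≠ a t ∧ z ≠ b t) (hzK : s(a i, z) ∈ K) (t : Fin 3) : G.Adj z (a t) := by
  by_cases hti : t = i
  · exact hti ▸ (hK.mem_edgeSet _ hzK).symm
  · exact (hp.adj_of_outer hG hK hr hz hzK hti).2

theorem not_adj_bot_of_outer (hp : IsPrism G a b) (hG : IsPlanar G) (hK : IsLplusClique G K)
    (hr : ∀ i, s(a i, b i) ∈ K) {i : Fin 3} {z : V} (hz : ∀ t, z ≠ a t ∧ z ≠ b t)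
    (hzK : s(a i, z) ∈ K) (j : Fin 3) : ¬ G.Adj z (b j) := by
  intro hzb
  have ha := hp.forall_adj_top_of_outer hG hK hr hz hzK
  by_cases hji : j = i
  · exact hG.1 ((hp.comp (Equiv.swap 0 j).injective).hasMinor_K5_of_forall_adj_top
      (fun _ => hz _) (fun _ => ha _) (by simpa using hzb))
  obtain ⟨k, hki, hkj⟩ := Fin.exists_ne_and_ne_of_three i j
  have hp' := hp.comp (injective_vec3 (Ne.symm hji) hki.symm hkj.symm)
  exact hG.2 (hp'.hasMinor_K33_of_adj_top_bot_top (fun _ => hz _) (ha i) hzb (ha k))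

end Planar

end IsPrism

section EdgeCounting

variable [DecidableEq V]

def leavingEdges (F : Finset (Sym2 V)) (S : Finset V) (s : V) : Finset (Sym2 V) :=
  F.filter fun g => s ∈ g ∧ g ∉ S.sym2

theorem exists_eq_mk_of_mem_leavingEdges {F : Finset (Sym2 V)} {S : Finset V} {s : V}
    {g : Sym2 V} (hs : s ∈ S) (hg : g ∈ leavingEdges F S s) : ∃ t ∉ S, g = s(s, t) := by
  obtain ⟨-, hsg, hgS⟩ := mem_filter.1 hg
  refine ⟨Sym2.Mem.other hsg, fun ht => hgS ?_, (Sym2.other_spec hsg).symm⟩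
  rw [← Sym2.other_spec hsg, mk_mem_sym2_iff]
  exact ⟨hs, ht⟩

theorem card_le_card_filter_add_sum_card_leavingEdges {ι : Type*} [Fintype ι]
    {F : Finset (Sym2 V)} (S : Finset V) (p : ι → V) (hmeet : ∀ g ∈ F, ∃ i, p i ∈ g) :
    F.card ≤ (F.filter (· ∈ S.sym2)).card + ∑ i, (leavingEdges F S (p i)).card := by
  calc F.card
      ≤ (F.filter (· ∈ S.sym2) ∪ univ.biUnion fun i => leavingEdges F S (p i)).card := by
        refine card_le_card fun g hg => ?_
        by_cases hgS : g ∈ S.sym2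
        · exact mem_union_left _ (mem_filter.2 ⟨hg, hgS⟩)
        · obtain ⟨i, hi⟩ := hmeet g hg
          exact mem_union_right _ (mem_biUnion.2 ⟨i, mem_univ _, mem_filter.2 ⟨hg, hi, hgS⟩⟩)
    _ ≤ _ := (card_union_le _ _).trans (Nat.add_le_add_left card_biUnion_le _)

theorem card_filter_mem_sym2_le {F : Finset (Sym2 V)} (hF : ∀ g ∈ F, ¬ g.IsDiag)
    (S : Finset V) : (F.filter (· ∈ S.sym2)).card ≤ S.card.choose 2 := by
  rw [← Sym2.card_image_offDiag]
  refine card_le_card fun g hg => ?_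
  obtain ⟨hgF, hgS⟩ := mem_filter.1 hg
  induction g using Sym2.ind with
  | _ x y =>
    rw [mk_mem_sym2_iff] at hgS
    refine mem_image.2 ⟨(x, y), mem_offDiag.2 ⟨hgS.1, hgS.2, fun h => ?_⟩, rfl⟩
    exact hF _ hgF (Sym2.mk_isDiag_iff.2 h)

end EdgeCounting

theorem exists_forall_ne_of_mem_leavingEdges [DecidableEq V] {K : Finset (Sym2 V)}
    {P : Finset V} {a b : Fin 3 → V} (hP : ∀ i, a i ∈ P ∧ b i ∈ P) {i : Fin 3} {g : Sym2 V}
    (hg : g ∈ leavingEdges K P (a i)) : ∃ z, (∀ t, z ≠ a t ∧ z ≠ b t) ∧ g = s(a i, z) := by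
  obtain ⟨z, hz, rfl⟩ := exists_eq_mk_of_mem_leavingEdges (hP i).1 hg
  exact ⟨z, fun t => ⟨fun h => hz (h ▸ (hP t).1), fun h => hz (h ▸ (hP t).2)⟩, rfl⟩

namespace IsPrism

variable [DecidableEq V] {G : SimpleGraph V} {K : Finset (Sym2 V)} {a b : Fin 3 → V}
  {P : Finset V}

theorem card_leavingEdges_le_two (hp : IsPrism G a b) (hG : IsPlanar G)
    (hK : IsLplusClique G K) (hr : ∀ i, s(a i, b i) ∈ K) (hP : ∀ i, a i ∈ P ∧ b i ∈ P)
    (i : Fin 3) : (leavingEdges K P (a i)).card ≤ 2 := by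
  by_contra! h
  obtain ⟨g₁, h₁, g₂, h₂, g₃, h₃, h₁₂, h₁₃, h₂₃⟩ := two_lt_card.1 h
  obtain ⟨z₁, hz₁, rfl⟩ := exists_forall_ne_of_mem_leavingEdges hP h₁
  obtain ⟨z₂, hz₂, rfl⟩ := exists_forall_ne_of_mem_leavingEdges hP h₂
  obtain ⟨z₃, hz₃, rfl⟩ := exists_forall_ne_of_mem_leavingEdges hP h₃
  have hadj := fun {z} (hz : ∀ t, z ≠ a t ∧ z ≠ b t) (h : s(a i, z) ∈ leavingEdges K P (a i)) =>
    hp.forall_adj_top_of_outer hG hK hr hz (mem_filter.1 h).1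
  refine hG.2 (hasMinor_K33_of_forall_adj (x := a) (y := ![z₁, z₂, z₃]) ?_ fun t u => ?_)
  · refine hp.top_injective.sumElim (injective_vec3 (fun h => h₁₂ (h ▸ rfl))
      (fun h => h₁₃ (h ▸ rfl)) (fun h => h₂₃ (h ▸ rfl))) fun t u => ?_
    fin_cases u
    exacts [(hz₁ t).1.symm, (hz₂ t).1.symm, (hz₃ t).1.symm]
  · fin_cases u
    exacts [(hadj hz₁ h₁ t).symm, (hadj hz₂ h₂ t).symm, (hadj hz₃ h₃ t).symm]

theorem leavingEdges_eq_empty_of_outer (hp : IsPrism G a b) (hG : IsPlanar G)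
    (hK : IsLplusClique G K) (hr : ∀ i, s(a i, b i) ∈ K) (hP : ∀ i, a i ∈ P ∧ b i ∈ P)
    {i : Fin 3} {z : V} (hz : ∀ t, z ≠ a t ∧ z ≠ b t) (hzK : s(a i, z) ∈ K) {j : Fin 3}
    (hji : j ≠ i) : leavingEdges K P (a j) = ∅ := by
  refine eq_empty_iff_forall_notMem.2 fun g hg => ?_
  obtain ⟨w, hw, rfl⟩ := exists_forall_ne_of_mem_leavingEdges hP hg
  exact hp.not_adj_diagonals hG hji.symm (hp.adj_of_outer hG hK hr hz hzK hji).1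
    (hp.adj_of_outer hG hK hr hw (mem_filter.1 hg).1 hji.symm).1

theorem filter_mem_sym2_bot_eq_empty_of_outer (hp : IsPrism G a b) (hG : IsPlanar G)
    (hK : IsLplusClique G K) (hr : ∀ i, s(a i, b i) ∈ K) {i : Fin 3} {z : V}
    (hz : ∀ t, z ≠ a t ∧ z ≠ b t) (hzK : s(a i, z) ∈ K) :
    K.filter (· ∈ (univ.image b).sym2) = ∅ := by
  refine filter_eq_empty_iff.2 fun g hg hgb => ?_
  induction g using Sym2.ind with
  | _ x y =>
    obtain ⟨⟨j, -, rfl⟩, ⟨k, -, rfl⟩⟩ := (mk_mem_sym2_iff.1 hgb).imp mem_image.1 mem_image.1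
    have hd : EdgeDisjoint s(a i, z) s(b j, b k) := edgeDisjoint_mk_iff.2
      ⟨hp.top_ne_bot i j, hp.top_ne_bot i k, (hz j).2, (hz k).2⟩
    rcases hK.adj_or_adj hzK hg hd with ⟨-, h⟩ | ⟨-, h⟩ <;>
      exact hp.not_adj_bot_of_outer hG hK hr hz hzK _ h

theorem sum_card_leavingEdges_add_card_le_three (hp : IsPrism G a b) (hG : IsPlanar G)
    (hK : IsLplusClique G K) (hr : ∀ i, s(a i, b i) ∈ K) (hP : ∀ i, a i ∈ P ∧ b i ∈ P) :
    ∑ i, (leavingEdges K P (a i)).card + (K.filter (· ∈ (univ.image b).sym2)).card ≤ 3 := by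
  by_cases h : ∃ i, (leavingEdges K P (a i)).Nonempty
  · obtain ⟨i, g, hg⟩ := h
    obtain ⟨z, hz, rfl⟩ := exists_forall_ne_of_mem_leavingEdges hP hg
    have hzK := (mem_filter.1 hg).1
    rw [sum_eq_single i (fun j _ hji => by
        rw [hp.leavingEdges_eq_empty_of_outer hG hK hr hP hz hzK hji, card_empty]) (by simp),
      hp.filter_mem_sym2_bot_eq_empty_of_outer hG hK hr hz hzK, card_empty]
    exact (hp.card_leavingEdges_le_two hG hK hr hP i).trans (by norm_num)
  · simp only [not_exists, not_nonempty_iff_eq_empty] at h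
    simp only [h, card_empty, sum_const_zero, zero_add]
    calc _ ≤ (univ.image b).card.choose 2 := card_filter_mem_sym2_le
          (fun g hg => G.not_isDiag_of_mem_edgeSet (hK.mem_edgeSet g hg)) _
      _ ≤ (3).choose 2 := Nat.choose_le_choose 2 (card_image_le.trans (by simp))
      _ = 3 := rfl

theorem card_inter_diagonals_le_one (hp : IsPrism G a b) (hG : IsPlanar G)
    (hK : IsLplusClique G K) {i j : Fin 3} (hij : i ≠ j) :
    (K ∩ {s(a i, b j), s(a j, b i)}).card ≤ 1 := by
  refine card_le_one.2 fun g hg g' hg' => ?_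
  obtain ⟨hgK, hg⟩ := mem_inter.1 hg
  obtain ⟨hg'K, hg'⟩ := mem_inter.1 hg'
  have hboth : s(a i, b j) ∈ K → s(a j, b i) ∈ K → False := fun h₁ h₂ =>
    hp.not_adj_diagonals hG hij (hK.mem_edgeSet _ h₁) (hK.mem_edgeSet _ h₂)
  simp only [mem_insert, mem_singleton] at hg hg'
  rcases hg with rfl | rfl <;> rcases hg' with rfl | rfl
  exacts [rfl, (hboth hgK hg'K).elim, (hboth hg'K hgK).elim, rfl]

theorem card_filter_exists_eq_mk_le_six (hp : IsPrism G a b) (hG : IsPlanar G)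
    (hK : IsLplusClique G K) : (K.filter fun g => ∃ i j, g = s(a i, b j)).card ≤ 6 := by
  set R := univ.image fun i => s(a i, b i)
  set D₀ := K ∩ {s(a 1, b 2), s(a 2, b 1)}
  set D₁ := K ∩ {s(a 0, b 2), s(a 2, b 0)}
  set D₂ := K ∩ {s(a 0, b 1), s(a 1, b 0)}
  have hsub : K.filter (fun g => ∃ i j, g = s(a i, b j)) ⊆ R ∪ D₀ ∪ D₁ ∪ D₂ := by
    intro g hg
    obtain ⟨hgK, i, j, rfl⟩ := mem_filter.1 hg
    by_cases hij : i = j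
    · subst hij
      exact mem_union_left _ (mem_union_left _ (mem_union_left _ (mem_image_of_mem _ (mem_univ _))))
    fin_cases i <;> fin_cases j <;> simp_all [D₀, D₁, D₂]
  have hR : R.card ≤ 3 := card_image_le.trans (by simp)
  have h₀ : D₀.card ≤ 1 := hp.card_inter_diagonals_le_one hG hK (by decide)
  have h₁ : D₁.card ≤ 1 := hp.card_inter_diagonals_le_one hG hK (by decide)
  have h₂ : D₂.card ≤ 1 := hp.card_inter_diagonals_le_one hG hK (by decide)
  have := card_union_le (R ∪ D₀ ∪ D₁) D₂
  have := card_union_le (R ∪ D₀) D₁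
  have := card_union_le R D₀
  have := card_le_card hsub
  omega

theorem card_filter_mem_sym2_le_add (hp : IsPrism G a b) (hG : IsPlanar G)
    (hK : IsLplusClique G K) :
    (K.filter (· ∈ (univ.image (Sum.elim a b)).sym2)).card ≤
      6 + (K.filter (· ∈ (univ.image a).sym2)).card +
        (K.filter (· ∈ (univ.image b).sym2)).card := by
  have hsub : K.filter (· ∈ (univ.image (Sum.elim a b)).sym2) ⊆
      K.filter (· ∈ (univ.image a).sym2) ∪ K.filter (· ∈ (univ.image b).sym2) ∪
        K.filter fun g => ∃ i j, g = s(a i, b j) := by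
    intro g hg
    obtain ⟨hgK, hgP⟩ := mem_filter.1 hg
    induction g using Sym2.ind with
    | _ x y =>
      obtain ⟨⟨x, -, rfl⟩, ⟨y, -, rfl⟩⟩ := (mk_mem_sym2_iff.1 hgP).imp mem_image.1 mem_image.1
      rcases x with i | i <;> rcases y with j | j <;> simp only [Sum.elim_inl, Sum.elim_inr] at hgK
      · simp [hgK]
      · exact mem_union_right _ (mem_filter.2 ⟨hgK, i, j, rfl⟩)
      · exact mem_union_right _ (mem_filter.2 ⟨hgK, j, i, Sym2.eq_swap⟩)
      · simp [hgK]
  have := card_le_card hsub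
  have := card_union_le (K.filter (· ∈ (univ.image a).sym2) ∪
    K.filter (· ∈ (univ.image b).sym2)) (K.filter fun g => ∃ i j, g = s(a i, b j))
  have := card_union_le (K.filter (· ∈ (univ.image a).sym2))
    (K.filter (· ∈ (univ.image b).sym2))
  have := hp.card_filter_exists_eq_mk_le_six hG hK
  omega

theorem exists_sumElim_mem (hp : IsPrism G a b)
    (h33 : ¬ HasMinor G (completeBipartiteGraph (Fin 3) (Fin 3))) (hK : IsLplusClique G K)
    (hr : ∀ i, s(a i, b i) ∈ K) {g : Sym2 V} (hg : g ∈ K) : ∃ x, Sum.elim a b x ∈ g := by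
  by_contra! h
  have hd : ∀ i, EdgeDisjoint g s(a i, b i) := fun i v hv hv' => by
    rcases Sym2.mem_iff.1 hv' with rfl | rfl
    exacts [h (.inl i) hv, h (.inr i) hv]
  obtain ⟨_, _, -, hp'⟩ := hK.exists_isPrism h33 (e := Fin.cons g fun i => s(a i, b i))
    (Fin.forall_fin_succ.2 ⟨hg, hr⟩) (pairwise_edgeDisjoint_cons hd hp.pairwise_edgeDisjoint)
  exact h33 hp'.hasMinor_K33

theorem card_le_twelve (hp : IsPrism G a b) (hG : IsPlanar G) (hK : IsLplusClique G K)
    (hr : ∀ i, s(a i, b i) ∈ K) : K.card ≤ 12 := by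
  have hP : ∀ i, a i ∈ univ.image (Sum.elim a b) ∧ b i ∈ univ.image (Sum.elim a b) := fun i =>
    ⟨mem_image_of_mem _ (mem_univ (Sum.inl i)), mem_image_of_mem _ (mem_univ (Sum.inr i))⟩
  have hcount := card_le_card_filter_add_sum_card_leavingEdges (univ.image (Sum.elim a b)) _
    fun g hg => hp.exists_sumElim_mem hG.2 hK hr hg
  simp only [Fintype.sum_sum_type, Sum.elim_inl, Sum.elim_inr] at hcount
  have htop := hp.sum_card_leavingEdges_add_card_le_three hG hK hr hP
  have hbot := hp.symm.sum_card_leavingEdges_add_card_le_three hG hK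
    (fun i => Sym2.eq_swap ▸ hr i) fun i => (hP i).symm
  have hinner := hp.card_filter_mem_sym2_le_add hG hK
  omega

end IsPrism

section NoThreeDisjoint

variable [DecidableEq V]

theorem exists_forall_mem_of_pairwise_not_edgeDisjoint {F : Finset (Sym2 V)}
    (hF : ∀ g ∈ F, ¬ g.IsDiag) (hint : ∀ g ∈ F, ∀ g' ∈ F, ¬ EdgeDisjoint g g')
    (hcard : 3 < F.card) : ∃ q, ∀ g ∈ F, q ∈ g := by
  by_contra! hno
  obtain ⟨g₁, hg₁⟩ := card_pos.1 (by omega : 0 < F.card)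
  obtain ⟨a, b, rfl⟩ := Sym2.exists_eq_mk g₁
  obtain ⟨g₂, hg₂, ha₂⟩ := hno a
  obtain ⟨g₃, hg₃, hb₃⟩ := hno b
  have hb₂ : b ∈ g₂ := (mem_or_mem_of_not_edgeDisjoint (hint _ hg₁ _ hg₂)).resolve_left ha₂
  have ha₃ : a ∈ g₃ := (mem_or_mem_of_not_edgeDisjoint (hint _ hg₁ _ hg₃)).resolve_right hb₃
  obtain ⟨c, rfl⟩ : ∃ c, g₂ = s(b, c) := ⟨_, (Sym2.other_spec hb₂).symm⟩
  have hc₃ : c ∈ g₃ := (mem_or_mem_of_not_edgeDisjoint (hint _ hg₂ _ hg₃)).resolve_left hb₃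
  have hab : a ≠ b := fun h => hF _ hg₁ (Sym2.mk_isDiag_iff.2 h)
  have hbc : b ≠ c := fun h => hF _ hg₂ (Sym2.mk_isDiag_iff.2 h)
  have hac : a ≠ c := by
    rintro rfl
    exact ha₂ (Sym2.mem_mk_right _ _)
  obtain rfl := (Sym2.mem_and_mem_iff hac).1 ⟨ha₃, hc₃⟩
  have hsub : F ⊆ {s(a, b), s(b, c), s(a, c)} := by
    intro g hg
    have h₁ := mem_or_mem_of_not_edgeDisjoint (hint _ hg₁ _ hg)
    have h₂ := mem_or_mem_of_not_edgeDisjoint (hint _ hg₂ _ hg)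
    have h₃ := mem_or_mem_of_not_edgeDisjoint (hint _ hg₃ _ hg)
    simp only [mem_insert, mem_singleton, ← Sym2.mem_and_mem_iff hab,
      ← Sym2.mem_and_mem_iff hbc, ← Sym2.mem_and_mem_iff hac]
    tauto
  have := (card_le_card hsub).trans card_le_three
  omega

theorem card_leavingEdges_le_two_of_edgeDisjoint {F : Finset (Sym2 V)} {S : Finset V} {s : V} (hs : s ∈ S)
    (hmeet : ∀ g ∈ F, ∃ v ∈ S, v ∈ g)
    (hν : ∀ g₁ ∈ F, ∀ g₂ ∈ F, ∀ g₃ ∈ F,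
      EdgeDisjoint g₁ g₂ → EdgeDisjoint g₁ g₃ → EdgeDisjoint g₂ g₃ → False)
    {α β : Sym2 V} (hα : α ∈ F) (hβ : β ∈ F) (hsα : s ∉ α) (hsβ : s ∉ β)
    (hαβ : EdgeDisjoint α β) : (leavingEdges F S s).card ≤ 2 := by
  classical
  -- `γ` meets `S`, so it has at most one end outside `S`
  have hone : ∀ γ ∈ F, s ∉ γ →
      ((leavingEdges F S s).filter (¬ EdgeDisjoint · γ)).card ≤ 1 := by
    intro γ hγ hsγ
    refine card_le_one.2 fun g hg g' hg' => ?_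
    obtain ⟨hgL, hgγ⟩ := mem_filter.1 hg
    obtain ⟨hg'L, hg'γ⟩ := mem_filter.1 hg'
    obtain ⟨t, ht, rfl⟩ := exists_eq_mk_of_mem_leavingEdges hs hgL
    obtain ⟨t', ht', rfl⟩ := exists_eq_mk_of_mem_leavingEdges hs hg'L
    have htγ := (mem_or_mem_of_not_edgeDisjoint hgγ).resolve_left hsγ
    have ht'γ := (mem_or_mem_of_not_edgeDisjoint hg'γ).resolve_left hsγ
    obtain ⟨w, hwS, hwγ⟩ := hmeet γ hγ
    have hwt : w ≠ t := fun h => ht (h ▸ hwS)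
    rw [(Sym2.mem_and_mem_iff hwt).1 ⟨hwγ, htγ⟩, Sym2.mem_iff] at ht'γ
    rcases ht'γ with rfl | rfl
    · exact absurd hwS ht'
    · rfl
  have hsub : leavingEdges F S s ⊆ (leavingEdges F S s).filter (¬ EdgeDisjoint · α) ∪
      (leavingEdges F S s).filter (¬ EdgeDisjoint · β) := by
    intro g hg
    by_contra hg'
    simp only [mem_union, mem_filter, hg, true_and, not_or, not_not] at hg'
    exact hν g (mem_filter.1 hg).1 α hα β hβ hg'.1 hg'.2 hαβ
  calc _ ≤ _ := card_le_card hsub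
    _ ≤ 1 + 1 := (card_union_le _ _).trans (Nat.add_le_add (hone α hα hsα) (hone β hβ hsβ))

theorem card_leavingEdges_add_card_leavingEdges_le_two {F : Finset (Sym2 V)} {S : Finset V}
    {u v x y : V}
    (hν : ∀ g₁ ∈ F, ∀ g₂ ∈ F, ∀ g₃ ∈ F,
      EdgeDisjoint g₁ g₂ → EdgeDisjoint g₁ g₃ → EdgeDisjoint g₂ g₃ → False)
    (huv : s(u, v) ∈ F) (hu : u ∈ S) (hv : v ∈ S) (hx : x ∈ S) (hy : y ∈ S) (hxy : x ≠ y)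
    (hd : EdgeDisjoint s(u, v) s(x, y)) (hx₂ : (leavingEdges F S x).card ≤ 2)
    (hy₂ : (leavingEdges F S y).card ≤ 2) :
    (leavingEdges F S x).card + (leavingEdges F S y).card ≤ 2 := by
  obtain ⟨hux, huy, hvx, hvy⟩ := edgeDisjoint_mk_iff.1 hd
  have hne : ∀ {w z}, w ∈ S → z ∉ S → w ≠ z := fun hw hz h => hz (h ▸ hw)
  -- with `uv`, two disjoint edges leaving `S` at `x` and at `y` would make three
  have hshare : ∀ g ∈ leavingEdges F S x, ∀ g' ∈ leavingEdges F S y,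
      ∃ t, g = s(x, t) ∧ g' = s(y, t) := by
    intro g hg g' hg'
    obtain ⟨t, ht, rfl⟩ := exists_eq_mk_of_mem_leavingEdges hx hg
    obtain ⟨t', ht', rfl⟩ := exists_eq_mk_of_mem_leavingEdges hy hg'
    refine ⟨t, rfl, by_contra fun htt' => hν _ huv _ (mem_filter.1 hg).1 _ (mem_filter.1 hg').1
      (edgeDisjoint_mk_iff.2 ⟨hux, hne hu ht, hvx, hne hv ht⟩)
      (edgeDisjoint_mk_iff.2 ⟨huy, hne hu ht', hvy, hne hv ht'⟩)
      (edgeDisjoint_mk_iff.2 ⟨hxy, hne hx ht', (hne hy ht).symm, fun h => htt' (h ▸ rfl)⟩)⟩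
  rcases (leavingEdges F S x).eq_empty_or_nonempty with h | ⟨g, hg⟩
  · rw [h, card_empty]
    omega
  rcases (leavingEdges F S y).eq_empty_or_nonempty with h | ⟨g', hg'⟩
  · rw [h, card_empty]
    omega
  have h₁ : (leavingEdges F S x).card ≤ 1 := card_le_one.2 fun g₁ h₁ g₂ h₂ => by
    obtain ⟨t₁, rfl, e₁⟩ := hshare g₁ h₁ g' hg'
    obtain ⟨t₂, rfl, e₂⟩ := hshare g₂ h₂ g' hg'
    rw [Sym2.congr_right.1 (e₁.symm.trans e₂)]
  have h₂ : (leavingEdges F S y).card ≤ 1 := card_le_one.2 fun g₁ h₁ g₂ h₂ => by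
    obtain ⟨t₁, e₁, rfl⟩ := hshare g hg g₁ h₁
    obtain ⟨t₂, e₂, rfl⟩ := hshare g hg g₂ h₂
    rw [Sym2.congr_right.1 (e₁.symm.trans e₂)]
  omega

variable [Fintype V] {G : SimpleGraph V} [DecidableRel G.Adj] {F : Finset (Sym2 V)}

theorem card_filter_mem_le_maxDegree (hF : ∀ g ∈ F, g ∈ G.edgeSet) (p : V) :
    (F.filter (p ∈ ·)).card ≤ G.maxDegree :=
  calc (F.filter (p ∈ ·)).card
      ≤ (G.incidenceFinset p).card := card_le_card fun g hg =>
        (G.mem_incidenceFinset p g).2 ⟨hF g (mem_filter.1 hg).1, (mem_filter.1 hg).2⟩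
    _ = G.degree p := G.card_incidenceFinset_eq_degree p
    _ ≤ G.maxDegree := G.degree_le_maxDegree p

theorem exists_edgeDisjoint_of_two_mul_maxDegree_lt (hF : ∀ g ∈ F, g ∈ G.edgeSet)
    (hΔ : 3 ≤ G.maxDegree) (hcard : 2 * G.maxDegree < F.card) (p : V) :
    ∃ α ∈ F, ∃ β ∈ F, p ∉ α ∧ p ∉ β ∧ EdgeDisjoint α β := by
  by_contra! h
  have hsplit := card_filter_add_card_filter_not (s := F) (p ∈ ·)
  have hp := card_filter_mem_le_maxDegree hF p
  obtain ⟨q, hq⟩ := exists_forall_mem_of_pairwise_not_edgeDisjoint (F := F.filter (p ∉ ·))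
    (fun g hg => G.not_isDiag_of_mem_edgeSet (hF g (mem_filter.1 hg).1))
    (fun g hg g' hg' => h g (mem_filter.1 hg).1 g' (mem_filter.1 hg').1 (mem_filter.1 hg).2
      (mem_filter.1 hg').2) (by omega)
  have hsub : F ⊆ F.filter (p ∈ ·) ∪ F.filter (q ∈ ·) := fun g hg => by
    by_cases hpg : p ∈ g
    · exact mem_union_left _ (mem_filter.2 ⟨hg, hpg⟩)
    · exact mem_union_right _ (mem_filter.2 ⟨hg, hq g (mem_filter.2 ⟨hg, hpg⟩)⟩)
  have := (card_le_card hsub).trans (card_union_le _ _)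
  have := card_filter_mem_le_maxDegree hF q
  omega

theorem card_le_two_mul_maxDegree_of_no_three_edgeDisjoint (hF : ∀ g ∈ F, g ∈ G.edgeSet)
    (hν : ∀ g₁ ∈ F, ∀ g₂ ∈ F, ∀ g₃ ∈ F,
      EdgeDisjoint g₁ g₂ → EdgeDisjoint g₁ g₃ → EdgeDisjoint g₂ g₃ → False)
    (hΔ : 5 ≤ G.maxDegree) : F.card ≤ 2 * G.maxDegree := by
  by_contra! hcard
  have hpair := exists_edgeDisjoint_of_two_mul_maxDegree_lt hF (by omega) hcard
  obtain ⟨g, -⟩ := card_pos.1 (by omega : 0 < F.card)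
  obtain ⟨p, -, -⟩ := Sym2.exists_eq_mk g
  obtain ⟨e, he, f, hf, -, -, hef⟩ := hpair p
  obtain ⟨u, v, rfl⟩ := Sym2.exists_eq_mk e
  obtain ⟨x, y, rfl⟩ := Sym2.exists_eq_mk f
  set S := univ.image ![u, v, x, y]
  have hS : ∀ i, ![u, v, x, y] i ∈ S := fun i => mem_image_of_mem _ (mem_univ i)
  have hmeet : ∀ g ∈ F, ∃ i, ![u, v, x, y] i ∈ g := by
    intro g hg
    by_contra! h
    refine hν g hg _ he _ hf (fun w hw hw' => ?_) (fun w hw hw' => ?_) hef <;>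
      rcases Sym2.mem_iff.1 hw' with rfl | rfl
    exacts [h 0 hw, h 1 hw, h 2 hw, h 3 hw]
  have h₂ : ∀ i, (leavingEdges F S (![u, v, x, y] i)).card ≤ 2 := fun i => by
    obtain ⟨α, hα, β, hβ, hsα, hsβ, hαβ⟩ := hpair (![u, v, x, y] i)
    refine card_leavingEdges_le_two_of_edgeDisjoint (hS i) (fun g hg => ?_) hν hα hβ hsα hsβ hαβ
    obtain ⟨j, hj⟩ := hmeet g hg
    exact ⟨_, hS j, hj⟩
  have hcount := card_le_card_filter_add_sum_card_leavingEdges S _ hmeet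
  have hinner : (F.filter (· ∈ S.sym2)).card ≤ 6 :=
    (card_filter_mem_sym2_le (fun g hg => G.not_isDiag_of_mem_edgeSet (hF g hg)) S).trans
      ((Nat.choose_le_choose 2 (card_image_le.trans (by simp) : S.card ≤ 4)).trans (by decide))
  have hxy := card_leavingEdges_add_card_leavingEdges_le_two hν he (hS 0) (hS 1) (hS 2) (hS 3)
    (G.mem_edgeSet.1 (hF _ hf)).ne hef (h₂ 2) (h₂ 3)
  have huv := card_leavingEdges_add_card_leavingEdges_le_two hν hf (hS 2) (hS 3) (hS 0) (hS 1)
    (G.mem_edgeSet.1 (hF _ he)).ne hef.symm (h₂ 0) (h₂ 1)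
  simp only [Fin.sum_univ_four] at hcount
  omega

end NoThreeDisjoint

theorem IsLplusClique.card_le_twelve_of_edgeDisjoint [DecidableEq V] {G : SimpleGraph V}
    {K : Finset (Sym2 V)} (hK : IsLplusClique G K) (hG : IsPlanar G) {g₁ g₂ g₃ : Sym2 V}
    (h₁ : g₁ ∈ K) (h₂ : g₂ ∈ K) (h₃ : g₃ ∈ K) (h₁₂ : EdgeDisjoint g₁ g₂)
    (h₁₃ : EdgeDisjoint g₁ g₃) (h₂₃ : EdgeDisjoint g₂ g₃) : K.card ≤ 12 := by
  have he : ∀ i, ![g₁, g₂, g₃] i ∈ K := Fin.forall_fin_succ.2 ⟨h₁, Fin.forall_fin_two.2 ⟨h₂, h₃⟩⟩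
  obtain ⟨a, b, hab, hp⟩ := hK.exists_isPrism hG.2 he (pairwise_edgeDisjoint_vec3 h₁₂ h₁₃ h₂₃)
  exact hp.card_le_twelve hG hK fun i => hab i ▸ he i

theorem cliqueNum_Lplus_planar_le {V : Type*} [Fintype V] [DecidableEq V]
    (G : SimpleGraph V) [DecidableRel G.Adj] (hG : IsPlanar G) (hΔ : 6 ≤ G.maxDegree) :
    (Lplus G).cliqueNum ≤ 2 * G.maxDegree := by
  obtain ⟨t, ht⟩ := (Lplus G).exists_isNClique_cliqueNum
  rw [← ht.card_eq, ← card_image_of_injective t Subtype.val_injective]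
  have hK := ht.isClique.isLplusClique_image_val
  by_cases hν : ∃ g₁ ∈ t.image Subtype.val, ∃ g₂ ∈ t.image Subtype.val,
      ∃ g₃ ∈ t.image Subtype.val,
        EdgeDisjoint g₁ g₂ ∧ EdgeDisjoint g₁ g₃ ∧ EdgeDisjoint g₂ g₃
  · obtain ⟨g₁, h₁, g₂, h₂, g₃, h₃, h₁₂, h₁₃, h₂₃⟩ := hν
    exact (hK.card_le_twelve_of_edgeDisjoint hG h₁ h₂ h₃ h₁₂ h₁₃ h₂₃).trans (by omega)
  · exact card_le_two_mul_maxDegree_of_no_three_edgeDisjoint hK.mem_edgeSet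
      (fun g₁ h₁ g₂ h₂ g₃ h₃ h₁₂ h₁₃ h₂₃ => hν ⟨g₁, h₁, g₂, h₂, g₃, h₃, h₁₂, h₁₃, h₂₃⟩)
      (by omega)
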